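/- In the BCK-algebra X'_n (n ≥ 5), the sequence defined by z_0 = n−1, z_1 = n−2 (where n−2 ≤ n−1 in the BCK-order), and z_k = z_{k-2}·(z_{k-2}·z_{k-1}) for k ≥ 2 satisfies z_k = n−1−k for all 0 ≤ k ≤ n−2; in particular z_{n-3} = 2 ≠ 1 = z_{n-2}, so the index n−2 in the stabilization z_{n-2} = z_{n-1} is minimal (X'_n is (n−2)-commutative). -/

import Mathlib

/-- The operation of the linearly ordered BCK-algebra `X_n` written on natural
numbers: `x*y = 0` if `x ≤ y`, `x*0 = x`, `x*y = 1` if `x = y+1`, and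
`x*y = x−y−1` if `x > y+1` and `y ≥ 1`. -/
def natStar (x y : ℕ) : ℕ :=
  if x ≤ y then 0 else if y = 0 then x else if x = y + 1 then 1 else x - y - 1

/-- The operation of `X'_n = {0, 1, …, n}` written on natural numbers:
`x·y = x*y` for `x, y ≤ n−1`; `n·0 = n`; `n·y = n−y−1` for `1 ≤ y ≤ n−2`;
`n·(n−1) = 1`; `x·n = 0` for every `x ≠ n−1` (in particular `n·n = 0`);
and `(n−1)·n = 1`. -/
def primeVal (n x y : ℕ) : ℕ :=
  if y = n then (if x = n - 1 then 1 else 0)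
  else if x = n then (if y = 0 then n else if y = n - 1 then 1 else n - y - 1)
  else natStar x y

theorem natStar_le (x y : ℕ) : natStar x y ≤ x := by
  unfold natStar; split_ifs <;> omega

theorem primeVal_lt {n x y : ℕ} (hn : 1 ≤ n) (hx : x < n + 1) (hy : y < n + 1) :
    primeVal n x y < n + 1 := by
  have h := natStar_le x y
  unfold primeVal; split_ifs <;> omega

/-- The BCK-algebra operation of `X'_n = {0, 1, …, n}` (for `n ≥ 5`),
as an operation on `Fin (n+1)`. -/
def primeOp {n : ℕ} (hn : 5 ≤ n) (x y : Fin (n + 1)) : Fin (n + 1) :=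
  ⟨primeVal n x y, primeVal_lt (by omega) x.isLt y.isLt⟩

/-- The sequence `z_0 = a`, `z_1 = b`, `z_k = z_{k-2}·(z_{k-2}·z_{k-1})`
for `k ≥ 2`. -/
def zseq {X : Type*} (op : X → X → X) (a b : X) : ℕ → X
  | 0 => a
  | 1 => b
  | k + 2 => op (zseq op a b k) (op (zseq op a b k) (zseq op a b (k + 1)))

lemma primeVal_step (n k : ℕ) (hn : 5 ≤ n) (hk : k + 4 ≤ n) :
    primeVal n (n - 1 - k) (primeVal n (n - 1 - k) (n - 2 - k)) = n - 3 - k := by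
  have h1 : primeVal n (n - 1 - k) (n - 2 - k) = 1 := by
    unfold primeVal natStar; split_ifs <;> omega
  rw [h1]; unfold primeVal natStar
  split_ifs <;> first | omega | exact False.elim (by assumption)

lemma zseq_val (n : ℕ) (hn : 5 ≤ n) (hA : n - 1 < n + 1) (hB : n - 2 < n + 1) :
    ∀ k : ℕ, k ≤ n - 2 →
      ((zseq (primeOp hn) ⟨n - 1, hA⟩ ⟨n - 2, hB⟩ k : Fin (n + 1)) : ℕ)
        = n - 1 - k := by
  intro k
  induction k using Nat.strong_induction_on with
  | _ k ih =>
    match k with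
    | 0 => intro _; simp [zseq]
    | 1 => intro _; simp [zseq]; omega
    | k + 2 =>
      intro hk
      have h1 := ih k (by omega) (by omega)
      have h2 := ih (k + 1) (by omega) (by omega)
      show (primeOp hn _ (primeOp hn _ _) : Fin (n+1)).val = _
      simp only [primeOp]
      rw [h1] at *
      have h2' : n - 2 - k = n - 1 - (k + 1) := by omega
      rw [← h2'] at h2
      rw [h2]
      have := primeVal_step n k hn (by omega)
      rw [this]
      omega

/-- In the BCK-algebra `X'_n` (`n ≥ 5`), the sequence defined by `z_0 = n−1`,
`z_1 = n−2` (where `n−2 ≤ n−1` in the BCK-order), and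
`z_k = z_{k-2}·(z_{k-2}·z_{k-1})` for `k ≥ 2` satisfies `z_k = n−1−k` for all
`0 ≤ k ≤ n−2`; in particular `z_{n-3} = 2 ≠ 1 = z_{n-2}`, so the index `n−2`
in the stabilization `z_{n-2} = z_{n-1}` is minimal
(`X'_n` is `(n−2)`-commutative). -/
theorem primeOp_n_sub_two_commutative (n : ℕ) (hn : 5 ≤ n) :
    primeOp hn ⟨n - 2, by omega⟩ ⟨n - 1, by omega⟩ = 0 ∧
    (∀ k : ℕ, k ≤ n - 2 →
      ((zseq (primeOp hn) ⟨n - 1, by omega⟩ ⟨n - 2, by omega⟩ k : Fin (n + 1)) : ℕ)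
        = n - 1 - k) ∧
    ((zseq (primeOp hn) ⟨n - 1, by omega⟩ ⟨n - 2, by omega⟩ (n - 3) : Fin (n + 1)) : ℕ) = 2 ∧
    ((zseq (primeOp hn) ⟨n - 1, by omega⟩ ⟨n - 2, by omega⟩ (n - 2) : Fin (n + 1)) : ℕ) = 1 ∧
    (∀ m : ℕ, m < n - 2 →
      ¬ (∀ a b : Fin (n + 1), primeOp hn b a = 0 →
          zseq (primeOp hn) a b m = zseq (primeOp hn) a b (m + 1))) := by
  have key := zseq_val n hn (by omega) (by omega)
  have h0 : primeOp hn ⟨n - 2, by omega⟩ ⟨n - 1, by omega⟩ = 0 := by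
    apply Fin.ext
    show primeVal n (n - 2) (n - 1) = (0 : Fin (n+1)).val
    unfold primeVal natStar
    split_ifs <;> simp <;> omega
  refine ⟨h0, key, ?_, ?_, ?_⟩
  · rw [key (n - 3) (by omega)]; omega
  · rw [key (n - 2) (by omega)]; omega
  · intro m hm hall
    have := hall ⟨n - 1, by omega⟩ ⟨n - 2, by omega⟩ h0
    have e1 := key m (by omega)
    have e2 := key (m + 1) (by omega)
    rw [this] at e1
    omega
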